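/- For the Kodaira-Thurston Lie algebra complex Λ(a,b,ā,b̄) with differential determined by ∂b = (1/2i)ab, ∂̄b = (1/2i)(ab̄ - bā), μ̄b = (1/2i)āb̄ (all other generators closed, plus conjugate equations), the Dolbeault cohomology dimensions are h^{0,0} = 1, h^{1,0} = 1, h^{2,0} = 0, h^{0,1} = 2, h^{1,1} = 4, h^{2,1} = 2, h^{0,2} = 0, h^{1,2} = 1, h^{2,2} = 1. -/

import Mathlib

/-- The free graded-commutative algebra `Λ(a,b,ā,b̄)` modelled as the exterior algebra on
four generators `a = g 0, b = g 1, ā = g 2, b̄ = g 3` of bidegrees `(1,0),(1,0),(0,1),(0,1)`. -/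
abbrev KTAlg : Type := ExteriorAlgebra ℂ (Fin 4 → ℂ)

noncomputable def gKT (i : Fin 4) : KTAlg :=
  ExteriorAlgebra.ι ℂ (Pi.single i 1)

/-- The bigraded pieces `A^{p,q}` of `Λ(a,b,ā,b̄)`. -/
noncomputable def AKT (p q : ℤ) : Submodule ℂ KTAlg :=
  if p = 0 ∧ q = 0 then Submodule.span ℂ {1}
  else if p = 1 ∧ q = 0 then Submodule.span ℂ {gKT 0, gKT 1}
  else if p = 0 ∧ q = 1 then Submodule.span ℂ {gKT 2, gKT 3}
  else if p = 2 ∧ q = 0 then Submodule.span ℂ {gKT 0 * gKT 1}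
  else if p = 1 ∧ q = 1 then
    Submodule.span ℂ {gKT 0 * gKT 2, gKT 0 * gKT 3, gKT 1 * gKT 2, gKT 1 * gKT 3}
  else if p = 0 ∧ q = 2 then Submodule.span ℂ {gKT 2 * gKT 3}
  else if p = 2 ∧ q = 1 then
    Submodule.span ℂ {gKT 0 * gKT 1 * gKT 2, gKT 0 * gKT 1 * gKT 3}
  else if p = 1 ∧ q = 2 then
    Submodule.span ℂ {gKT 0 * gKT 2 * gKT 3, gKT 1 * gKT 2 * gKT 3}
  else if p = 2 ∧ q = 2 then Submodule.span ℂ {gKT 0 * gKT 1 * gKT 2 * gKT 3}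
  else ⊥

/-- Dolbeault cocycles: `ω ∈ A^{p,q} ∩ Ker μ̄` with `∂̄ω ∈ μ̄(A^{p+1,q-1})`. -/
noncomputable def ZKT (mub delb : KTAlg →ₗ[ℂ] KTAlg) (p q : ℤ) : Submodule ℂ KTAlg :=
  AKT p q ⊓ LinearMap.ker mub ⊓ Submodule.comap delb ((AKT (p + 1) (q - 1)).map mub)

/-- Dolbeault coboundaries: `μ̄α + ∂̄β` with `α ∈ A^{p+1,q-2}`, `β ∈ A^{p,q-1}`, `μ̄β = 0`. -/
noncomputable def BKT (mub delb : KTAlg →ₗ[ℂ] KTAlg) (p q : ℤ) : Submodule ℂ KTAlg :=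
  (AKT (p + 1) (q - 2)).map mub ⊔ ((AKT p (q - 1) ⊓ LinearMap.ker mub)).map delb

/-- Dolbeault numbers `h^{p,q} = dim H^q(H_μ̄^{p,*}, ∂̄)`. -/
noncomputable def hKT (mub delb : KTAlg →ₗ[ℂ] KTAlg) (p q : ℤ) : ℕ :=
  Module.finrank ℂ
    (↥(ZKT mub delb p q) ⧸
      Submodule.comap (ZKT mub delb p q).subtype (BKT mub delb p q))

open ExteriorAlgebra Submodule Module

/-!
Write `a, b, ā, b̄` for `gKT 0, …, gKT 3` and `c` for the structure constant `1/(2i)`; any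
`c ≠ 0` would do. By the graded Leibniz rule, `μ̄` and `∂̄` are determined by their values on
the generators: `μ̄` vanishes on every `A^{p,q}` except `A^{1,0}` (`μ̄b = c āb̄`) and `A^{2,0}`
(`μ̄(ab) = -c aāb̄`), while `∂̄` vanishes on `A^{0,0}`, `A^{2,1}` and every `A^{p,2}`.
Hence the cocycles are all of `A^{p,q}`, except `Z^{1,0} = ⟨a⟩` and `Z^{2,0} = 0`, and the only
nonzero coboundaries are `B^{0,2} ⊇ μ̄(A^{1,0}) = A^{0,2}` and
`B^{1,2} = μ̄(A^{2,0}) = ∂̄(A^{1,1}) = ⟨aāb̄⟩`. The dimensions are then read off from the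
linear independence of the standard monomials of the exterior algebra.
-/

theorem ExteriorAlgebra.linearIndependent_ιMulti_comp_of_strictMono {R M I ι : Type*}
    [CommRing R] [AddCommGroup M] [Module R M] [LinearOrder I] (b : Basis I R M) {k : ℕ}
    {v : ι → Fin k → I} (hv : ∀ i, StrictMono (v i)) (hinj : Function.Injective v) :
    LinearIndependent R fun i => ιMulti R k (b ∘ v i) := by
  let s : ι → Set.powersetCard I k := fun i =>
    Set.powersetCard.ofFinEmbEquiv (OrderEmbedding.ofStrictMono _ (hv i))
  have hs : Function.Injective s := fun i j hij =>
    hinj (congrArg DFunLike.coe (Set.powersetCard.ofFinEmbEquiv.injective hij))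
  have hfamily : LinearIndependent R (ιMulti_family R k b) := by
    rw [exteriorPower.ιMulti_family_eq_coe_comp]
    exact (exteriorPower.ιMulti_family_linearIndependent_ofBasis R k b).map' _ (ker_subtype _)
  have hcomp : (fun i => ιMulti R k (b ∘ v i)) = ιMulti_family R k b ∘ s := by
    funext i
    simp [s, ιMulti_family]
  rw [hcomp]
  exact hfamily.comp s hs

section DivisionRing

variable {K V W : Type*} [DivisionRing K] [AddCommGroup V] [Module K V] [AddCommGroup W]
  [Module K W]

theorem Submodule.finrank_quotient_comap_subtype_add_finrank {Z B : Submodule K V}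
    [FiniteDimensional K Z] (h : B ≤ Z) :
    finrank K (Z ⧸ B.comap Z.subtype) + finrank K B = finrank K Z := by
  rw [← (comapSubtypeEquivOfLe h).finrank_eq]
  exact finrank_quotient_add_finrank _

theorem Submodule.finrank_quotient_comap_subtype_eq_zero {Z B : Submodule K V} (h : Z ≤ B) :
    finrank K (Z ⧸ B.comap Z.subtype) = 0 := by
  have : Subsingleton (Z ⧸ B.comap Z.subtype) :=
    Submodule.Quotient.subsingleton_iff.2 (comap_subtype_eq_top.2 h)
  exact finrank_zero_of_subsingleton

theorem Submodule.span_singleton_inf_ker_eq_bot (f : V →ₗ[K] W) {x : V} (hx : f x ≠ 0) :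
    (K ∙ x) ⊓ LinearMap.ker f = ⊥ :=
  disjoint_iff.1 (disjoint_span_singleton.2 fun h => absurd h hx).symm

theorem Submodule.span_pair_inf_ker_eq_span_singleton (f : V →ₗ[K] W) {x y : V}
    (hx : f x = 0) (hy : f y ≠ 0) : span K {x, y} ⊓ LinearMap.ker f = K ∙ x := by
  rw [span_insert, sup_inf_assoc_of_le _ ((span_singleton_le_iff_mem _ _).2 hx),
    span_singleton_inf_ker_eq_bot f hy, sup_bot_eq]

end DivisionRing

@[simp] lemma gKT_mul_self (i : Fin 4) : gKT i * gKT i = 0 := ι_sq_zero _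

@[simp] lemma gKT_mul_gKT_mul_self (i : Fin 4) (x : KTAlg) : gKT i * (gKT i * x) = 0 := by
  rw [← mul_assoc, gKT_mul_self, zero_mul]

lemma gKT_mul_comm (i j : Fin 4) : gKT j * gKT i = -(gKT i * gKT j) :=
  eq_neg_of_add_eq_zero_left (ι_add_mul_swap _ _)

lemma gKT_mul_gKT_mul_comm (i j : Fin 4) (x : KTAlg) :
    gKT j * (gKT i * x) = -(gKT i * (gKT j * x)) := by
  rw [← mul_assoc, gKT_mul_comm, ← mul_assoc, neg_mul]

lemma ιMulti_basisFun_comp (k : ℕ) (v : Fin k → Fin 4) :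
    ιMulti ℂ k (Pi.basisFun ℂ (Fin 4) ∘ v) = (List.ofFn fun i => gKT (v i)).prod := by
  simp [ιMulti_apply, gKT]

lemma linearIndependent_monomial {ι : Type*} {k : ℕ} {v : ι → Fin k → Fin 4}
    (hv : ∀ i, StrictMono (v i)) (hinj : Function.Injective v) :
    LinearIndependent ℂ fun i => (List.ofFn fun j => gKT (v i j)).prod := by
  simpa only [ιMulti_basisFun_comp] using
    linearIndependent_ιMulti_comp_of_strictMono (Pi.basisFun ℂ (Fin 4)) hv hinj

lemma finrank_span_monomial {n k : ℕ} {v : Fin n → Fin k → Fin 4} (hv : ∀ i, StrictMono (v i))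
    (hinj : Function.Injective v) {s : Set KTAlg}
    (hs : Set.range (fun i => (List.ofFn fun j => gKT (v i j)).prod) = s) :
    finrank ℂ (span ℂ s) = n := by
  rw [← hs, finrank_span_eq_card (linearIndependent_monomial hv hinj), Fintype.card_fin]

lemma gKT_zero_ne_zero : gKT 0 ≠ 0 := by
  simpa using (linearIndependent_monomial (v := ![![0]]) (by decide) (by decide)).ne_zero 0

lemma gKT_two_mul_gKT_three_ne_zero : gKT 2 * gKT 3 ≠ 0 := by
  simpa using (linearIndependent_monomial (v := ![![2, 3]]) (by decide) (by decide)).ne_zero 0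

lemma gKT_zero_mul_gKT_two_mul_gKT_three_ne_zero : gKT 0 * gKT 2 * gKT 3 ≠ 0 := by
  simpa [mul_assoc] using
    (linearIndependent_monomial (v := ![![0, 2, 3]]) (by decide) (by decide)).ne_zero 0

lemma AKT_zero_zero : AKT 0 0 = ℂ ∙ 1 := by simp [AKT]

lemma AKT_one_zero : AKT 1 0 = span ℂ {gKT 0, gKT 1} := by simp [AKT]

lemma AKT_zero_one : AKT 0 1 = span ℂ {gKT 2, gKT 3} := by simp [AKT]

lemma AKT_two_zero : AKT 2 0 = ℂ ∙ (gKT 0 * gKT 1) := by simp [AKT]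

lemma AKT_one_one :
    AKT 1 1 = span ℂ {gKT 0 * gKT 2, gKT 0 * gKT 3, gKT 1 * gKT 2, gKT 1 * gKT 3} := by
  simp [AKT]

lemma AKT_zero_two : AKT 0 2 = ℂ ∙ (gKT 2 * gKT 3) := by simp [AKT]

lemma AKT_two_one : AKT 2 1 = span ℂ {gKT 0 * gKT 1 * gKT 2, gKT 0 * gKT 1 * gKT 3} := by
  simp [AKT]

lemma AKT_one_two : AKT 1 2 = span ℂ {gKT 0 * gKT 2 * gKT 3, gKT 1 * gKT 2 * gKT 3} := by
  simp [AKT]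

lemma AKT_two_two : AKT 2 2 = ℂ ∙ (gKT 0 * gKT 1 * gKT 2 * gKT 3) := by simp [AKT]

lemma AKT_eq_bot {p q : ℤ} (h : q < 0 ∨ 2 < p) : AKT p q = ⊥ := by
  unfold AKT
  split_ifs <;> first | rfl | omega

instance (p q : ℤ) : FiniteDimensional ℂ (AKT p q) := by
  rw [← fg_iff_finiteDimensional]
  unfold AKT
  split_ifs <;> first | exact fg_bot | exact fg_span (Set.toFinite _)

lemma gKT_mem_AKT (i : Fin 4) : gKT i ∈ AKT 1 0 ∨ gKT i ∈ AKT 0 1 := by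
  rw [AKT_one_zero, AKT_zero_one]
  fin_cases i
  exacts [.inl (subset_span (by simp)), .inl (subset_span (by simp)),
    .inr (subset_span (by simp)), .inr (subset_span (by simp))]

lemma finrank_AKT_zero_one : finrank ℂ (AKT 0 1) = 2 := by
  rw [AKT_zero_one]
  exact finrank_span_monomial (v := ![![2], ![3]]) (by decide) (by decide)
    (by ext; simp [Fin.exists_fin_succ, eq_comm])

lemma finrank_AKT_one_one : finrank ℂ (AKT 1 1) = 4 := by
  rw [AKT_one_one]
  exact finrank_span_monomial (v := ![![0, 2], ![0, 3], ![1, 2], ![1, 3]]) (by decide)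
    (by decide) (by ext; simp [Fin.exists_fin_succ, eq_comm])

lemma finrank_AKT_two_one : finrank ℂ (AKT 2 1) = 2 := by
  rw [AKT_two_one]
  exact finrank_span_monomial (v := ![![0, 1, 2], ![0, 1, 3]]) (by decide) (by decide)
    (by ext; simp [Fin.exists_fin_succ, eq_comm, mul_assoc])

lemma finrank_AKT_one_two : finrank ℂ (AKT 1 2) = 2 := by
  rw [AKT_one_two]
  exact finrank_span_monomial (v := ![![0, 2, 3], ![1, 2, 3]]) (by decide) (by decide)
    (by ext; simp [Fin.exists_fin_succ, eq_comm, mul_assoc])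

lemma finrank_AKT_two_two : finrank ℂ (AKT 2 2) = 1 := by
  rw [AKT_two_two]
  exact finrank_span_monomial (v := ![![0, 1, 2, 3]]) (by decide) (by decide)
    (by ext; simp [mul_assoc])

section Cohomology

variable {mub delb : KTAlg →ₗ[ℂ] KTAlg} {p q : ℤ}

lemma ZKT_eq_inf_ker (h : AKT p q ⊓ LinearMap.ker mub ≤ LinearMap.ker delb) :
    ZKT mub delb p q = AKT p q ⊓ LinearMap.ker mub :=
  inf_eq_left.2 fun x hx => mem_comap.2 <| by
    rw [LinearMap.mem_ker.1 (h hx)]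
    exact zero_mem _

lemma ZKT_eq_AKT_of_le_ker (hmub : AKT p q ≤ LinearMap.ker mub)
    (hdelb : AKT p q ≤ LinearMap.ker delb) : ZKT mub delb p q = AKT p q := by
  rw [ZKT_eq_inf_ker (inf_le_left.trans hdelb), inf_eq_left.2 hmub]

lemma ZKT_eq_AKT (hmub : AKT p q ≤ LinearMap.ker mub)
    (hdelb : (AKT p q).map delb ≤ (AKT (p + 1) (q - 1)).map mub) :
    ZKT mub delb p q = AKT p q :=
  le_antisymm (inf_le_left.trans inf_le_left)
    (le_inf (le_inf le_rfl hmub) (map_le_iff_le_comap.1 hdelb))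

lemma hKT_add_finrank_BKT (h : BKT mub delb p q ≤ ZKT mub delb p q) :
    hKT mub delb p q + finrank ℂ (BKT mub delb p q) = finrank ℂ (ZKT mub delb p q) := by
  have : FiniteDimensional ℂ (ZKT mub delb p q) :=
    Submodule.finiteDimensional_of_le (inf_le_left.trans inf_le_left)
  exact finrank_quotient_comap_subtype_add_finrank h

lemma hKT_eq_finrank_ZKT (h : BKT mub delb p q = ⊥) :
    hKT mub delb p q = finrank ℂ (ZKT mub delb p q) := by
  have := hKT_add_finrank_BKT (h.trans_le bot_le)
  rwa [h, finrank_bot, add_zero] at this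

lemma hKT_eq_zero (h : ZKT mub delb p q ≤ BKT mub delb p q) : hKT mub delb p q = 0 :=
  finrank_quotient_comap_subtype_eq_zero h

end Cohomology

def IsAntiderivation (d : KTAlg →ₗ[ℂ] KTAlg) : Prop :=
  ∀ p q : ℤ, ∀ x ∈ AKT p q, ∀ y : KTAlg, d (x * y) = d x * y + ((-1 : ℂ) ^ (p + q)) • (x * d y)

namespace IsAntiderivation

variable {d : KTAlg →ₗ[ℂ] KTAlg}

lemma map_one (hd : IsAntiderivation d) : d 1 = 0 := by
  simpa using hd 0 0 1 (by simp [AKT_zero_zero]) 1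

lemma map_gKT_mul (hd : IsAntiderivation d) (i : Fin 4) (y : KTAlg) :
    d (gKT i * y) = d (gKT i) * y - gKT i * d y := by
  rcases gKT_mem_AKT i with hi | hi <;> simp [hd _ _ _ hi, sub_eq_add_neg]

end IsAntiderivation

structure IsKTPair (c : ℂ) (mub delb : KTAlg →ₗ[ℂ] KTAlg) : Prop where
  mub_antideriv : IsAntiderivation mub
  delb_antideriv : IsAntiderivation delb
  mub_gKT_zero : mub (gKT 0) = 0
  mub_gKT_one : mub (gKT 1) = c • (gKT 2 * gKT 3)
  mub_gKT_two : mub (gKT 2) = 0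
  mub_gKT_three : mub (gKT 3) = 0
  delb_gKT_zero : delb (gKT 0) = 0
  delb_gKT_one : delb (gKT 1) = c • (gKT 0 * gKT 3 - gKT 1 * gKT 2)
  delb_gKT_two : delb (gKT 2) = 0
  delb_gKT_three : delb (gKT 3) = (-c) • (gKT 2 * gKT 3)

namespace IsKTPair

variable {c : ℂ} {mub delb : KTAlg →ₗ[ℂ] KTAlg}

lemma mub_gKT_zero_mul_gKT_one (h : IsKTPair c mub delb) :
    mub (gKT 0 * gKT 1) = (-c) • (gKT 0 * gKT 2 * gKT 3) := by
  simp [h.mub_antideriv.map_gKT_mul, h.mub_gKT_zero, h.mub_gKT_one, mul_assoc]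

lemma AKT_le_ker_mub (h : IsKTPair c mub delb) {p q : ℤ} (hpq : p = 0 ∨ 0 < q) :
    AKT p q ≤ LinearMap.ker mub := by
  unfold AKT
  split_ifs <;> first | exact bot_le | (exfalso; omega) |
    simp [span_le, Set.insert_subset_iff, mul_assoc, h.mub_antideriv.map_gKT_mul,
      h.mub_antideriv.map_one, h.mub_gKT_zero, h.mub_gKT_one, h.mub_gKT_two, h.mub_gKT_three,
      gKT_mul_comm 2 3, gKT_mul_gKT_mul_comm 2 3]

lemma AKT_le_ker_delb (h : IsKTPair c mub delb) {p q : ℤ}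
    (hpq : 2 ≤ q ∨ p = 0 ∧ q = 0 ∨ p = 2 ∧ q = 1) : AKT p q ≤ LinearMap.ker delb := by
  unfold AKT
  split_ifs <;> first | exact bot_le | (exfalso; omega) |
    simp [span_le, Set.insert_subset_iff, mul_assoc, sub_mul, h.delb_antideriv.map_gKT_mul,
      h.delb_antideriv.map_one, h.delb_gKT_zero, h.delb_gKT_one, h.delb_gKT_two,
      h.delb_gKT_three, gKT_mul_comm 2 3, gKT_mul_gKT_mul_comm 2 3]

lemma AKT_one_zero_inf_ker_mub (h : IsKTPair c mub delb) (hc : c ≠ 0) :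
    AKT 1 0 ⊓ LinearMap.ker mub = ℂ ∙ gKT 0 := by
  rw [AKT_one_zero, span_pair_inf_ker_eq_span_singleton mub h.mub_gKT_zero]
  rw [h.mub_gKT_one]
  exact smul_ne_zero hc gKT_two_mul_gKT_three_ne_zero

lemma AKT_two_zero_inf_ker_mub (h : IsKTPair c mub delb) (hc : c ≠ 0) :
    AKT 2 0 ⊓ LinearMap.ker mub = ⊥ := by
  rw [AKT_two_zero, span_singleton_inf_ker_eq_bot mub]
  rw [h.mub_gKT_zero_mul_gKT_one]
  exact smul_ne_zero (neg_ne_zero.2 hc) gKT_zero_mul_gKT_two_mul_gKT_three_ne_zero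

lemma map_mub_AKT_one_zero (h : IsKTPair c mub delb) (hc : c ≠ 0) :
    (AKT 1 0).map mub = ℂ ∙ (gKT 2 * gKT 3) := by
  rw [AKT_one_zero, map_span, Set.image_pair, h.mub_gKT_zero, h.mub_gKT_one, span_insert_zero,
    span_singleton_smul_eq (isUnit_iff_ne_zero.2 hc)]

lemma map_mub_AKT_two_zero (h : IsKTPair c mub delb) (hc : c ≠ 0) :
    (AKT 2 0).map mub = ℂ ∙ (gKT 0 * gKT 2 * gKT 3) := by
  rw [AKT_two_zero, map_span, Set.image_singleton, h.mub_gKT_zero_mul_gKT_one,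
    span_singleton_smul_eq (isUnit_iff_ne_zero.2 (neg_ne_zero.2 hc))]

lemma map_delb_AKT_one_one (h : IsKTPair c mub delb) (hc : c ≠ 0) :
    (AKT 1 1).map delb = ℂ ∙ (gKT 0 * gKT 2 * gKT 3) := by
  rw [← span_singleton_smul_eq (isUnit_iff_ne_zero.2 hc)]
  simp [AKT_one_one, map_span, Set.image_insert_eq, mul_assoc, sub_mul,
    h.delb_antideriv.map_gKT_mul, h.delb_gKT_zero, h.delb_gKT_one, h.delb_gKT_two,
    h.delb_gKT_three, gKT_mul_comm 2 3]
  refine le_antisymm ?_ (span_mono (by simp))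
  simp [span_le, Set.insert_subset_iff, mem_span_singleton_self]

lemma hKT_zero_zero (h : IsKTPair c mub delb) : hKT mub delb 0 0 = 1 := by
  have hZ : ZKT mub delb 0 0 = AKT 0 0 :=
    ZKT_eq_AKT_of_le_ker (h.AKT_le_ker_mub (by norm_num)) (h.AKT_le_ker_delb (by norm_num))
  have hB : BKT mub delb 0 0 = ⊥ := by simp [BKT, AKT_eq_bot]
  rw [hKT_eq_finrank_ZKT hB, hZ, AKT_zero_zero, finrank_span_singleton one_ne_zero]

lemma hKT_one_zero (h : IsKTPair c mub delb) (hc : c ≠ 0) : hKT mub delb 1 0 = 1 := by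
  have hZ : ZKT mub delb 1 0 = ℂ ∙ gKT 0 := by
    rw [ZKT_eq_inf_ker, h.AKT_one_zero_inf_ker_mub hc]
    rw [h.AKT_one_zero_inf_ker_mub hc, span_singleton_le_iff_mem]
    exact h.delb_gKT_zero
  have hB : BKT mub delb 1 0 = ⊥ := by simp [BKT, AKT_eq_bot]
  rw [hKT_eq_finrank_ZKT hB, hZ, finrank_span_singleton gKT_zero_ne_zero]

lemma hKT_two_zero (h : IsKTPair c mub delb) (hc : c ≠ 0) : hKT mub delb 2 0 = 0 :=
  hKT_eq_zero (inf_le_left.trans ((h.AKT_two_zero_inf_ker_mub hc).trans_le bot_le))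

lemma hKT_zero_one (h : IsKTPair c mub delb) (hc : c ≠ 0) : hKT mub delb 0 1 = 2 := by
  have hZ : ZKT mub delb 0 1 = AKT 0 1 := by
    refine ZKT_eq_AKT (h.AKT_le_ker_mub (by norm_num)) ?_
    rw [show (0 : ℤ) + 1 = 1 by norm_num, show (1 : ℤ) - 1 = 0 by norm_num,
      h.map_mub_AKT_one_zero hc, AKT_zero_one, map_span, span_le]
    simp [Set.insert_subset_iff, h.delb_gKT_two, h.delb_gKT_three, smul_mem,
      mem_span_singleton_self]
  have hB : BKT mub delb 0 1 = ⊥ := by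
    simpa [BKT, AKT_eq_bot] using
      LinearMap.le_ker_iff_map.1 (inf_le_left.trans (h.AKT_le_ker_delb (by norm_num)))
  rw [hKT_eq_finrank_ZKT hB, hZ, finrank_AKT_zero_one]

lemma hKT_one_one (h : IsKTPair c mub delb) (hc : c ≠ 0) : hKT mub delb 1 1 = 4 := by
  have hZ : ZKT mub delb 1 1 = AKT 1 1 := by
    refine ZKT_eq_AKT (h.AKT_le_ker_mub (by norm_num)) ?_
    rw [h.map_delb_AKT_one_one hc]
    norm_num [h.map_mub_AKT_two_zero hc]
  have hB : BKT mub delb 1 1 = ⊥ := by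
    simp [BKT, AKT_eq_bot, h.AKT_one_zero_inf_ker_mub hc, map_span, h.delb_gKT_zero]
  rw [hKT_eq_finrank_ZKT hB, hZ, finrank_AKT_one_one]

lemma hKT_two_one (h : IsKTPair c mub delb) (hc : c ≠ 0) : hKT mub delb 2 1 = 2 := by
  have hZ : ZKT mub delb 2 1 = AKT 2 1 :=
    ZKT_eq_AKT_of_le_ker (h.AKT_le_ker_mub (by norm_num)) (h.AKT_le_ker_delb (by norm_num))
  have hB : BKT mub delb 2 1 = ⊥ := by
    simp [BKT, AKT_eq_bot, h.AKT_two_zero_inf_ker_mub hc]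
  rw [hKT_eq_finrank_ZKT hB, hZ, finrank_AKT_two_one]

lemma hKT_zero_two (h : IsKTPair c mub delb) (hc : c ≠ 0) : hKT mub delb 0 2 = 0 := by
  refine hKT_eq_zero ((inf_le_left.trans inf_le_left).trans (le_sup_of_le_left ?_))
  norm_num [AKT_zero_two, h.map_mub_AKT_one_zero hc]

lemma hKT_one_two (h : IsKTPair c mub delb) (hc : c ≠ 0) : hKT mub delb 1 2 = 1 := by
  have hZ : ZKT mub delb 1 2 = AKT 1 2 :=
    ZKT_eq_AKT_of_le_ker (h.AKT_le_ker_mub (by norm_num)) (h.AKT_le_ker_delb (by norm_num))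
  have hB : BKT mub delb 1 2 = ℂ ∙ (gKT 0 * gKT 2 * gKT 3) := by
    norm_num [BKT, h.map_mub_AKT_two_zero hc, h.map_delb_AKT_one_one hc,
      inf_eq_left.2 (h.AKT_le_ker_mub (p := 1) (q := 1) (by norm_num))]
  have hBZ : BKT mub delb 1 2 ≤ ZKT mub delb 1 2 := by
    rw [hB, hZ, AKT_one_two]
    exact span_mono (by simp)
  have := hKT_add_finrank_BKT hBZ
  rw [hB, hZ, finrank_AKT_one_two,
    finrank_span_singleton gKT_zero_mul_gKT_two_mul_gKT_three_ne_zero] at this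
  omega

lemma hKT_two_two (h : IsKTPair c mub delb) : hKT mub delb 2 2 = 1 := by
  have hZ : ZKT mub delb 2 2 = AKT 2 2 :=
    ZKT_eq_AKT_of_le_ker (h.AKT_le_ker_mub (by norm_num)) (h.AKT_le_ker_delb (by norm_num))
  have hB : BKT mub delb 2 2 = ⊥ := by
    simpa [BKT, AKT_eq_bot] using LinearMap.le_ker_iff_map.1
      (inf_le_left.trans (h.AKT_le_ker_delb (p := 2) (q := 1) (by norm_num)))
  rw [hKT_eq_finrank_ZKT hB, hZ, finrank_AKT_two_two]

end IsKTPair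

/-- For the Kodaira-Thurston Lie algebra complex `Λ(a,b,ā,b̄)` (so `μ̄b = (1/2i)āb̄`,
`∂̄b = (1/2i)(ab̄ - bā)`, `∂̄b̄ = -(1/2i)āb̄`, and `a, ā` closed), the Dolbeault
cohomology has dimensions
`h^{0,0}=1, h^{1,0}=1, h^{2,0}=0, h^{0,1}=2, h^{1,1}=4, h^{2,1}=2, h^{0,2}=0,
h^{1,2}=1, h^{2,2}=1`. -/
theorem stmt_15 (mub delb : KTAlg →ₗ[ℂ] KTAlg)
    (hmub_deriv : ∀ p q : ℤ, ∀ x ∈ AKT p q, ∀ y : KTAlg,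
      mub (x * y) = mub x * y + ((-1 : ℂ) ^ (p + q)) • (x * mub y))
    (hdelb_deriv : ∀ p q : ℤ, ∀ x ∈ AKT p q, ∀ y : KTAlg,
      delb (x * y) = delb x * y + ((-1 : ℂ) ^ (p + q)) • (x * delb y))
    (hmub0 : mub (gKT 0) = 0)
    (hmub1 : mub (gKT 1) = (1 / (2 * Complex.I)) • (gKT 2 * gKT 3))
    (hmub2 : mub (gKT 2) = 0)
    (hmub3 : mub (gKT 3) = 0)
    (hdelb0 : delb (gKT 0) = 0)
    (hdelb1 : delb (gKT 1) =
      (1 / (2 * Complex.I)) • (gKT 0 * gKT 3 - gKT 1 * gKT 2))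
    (hdelb2 : delb (gKT 2) = 0)
    (hdelb3 : delb (gKT 3) = (-(1 / (2 * Complex.I))) • (gKT 2 * gKT 3)) :
    hKT mub delb 0 0 = 1 ∧ hKT mub delb 1 0 = 1 ∧ hKT mub delb 2 0 = 0 ∧
    hKT mub delb 0 1 = 2 ∧ hKT mub delb 1 1 = 4 ∧ hKT mub delb 2 1 = 2 ∧
    hKT mub delb 0 2 = 0 ∧ hKT mub delb 1 2 = 1 ∧ hKT mub delb 2 2 = 1 := by
  have h : IsKTPair (1 / (2 * Complex.I)) mub delb :=
    ⟨hmub_deriv, hdelb_deriv, hmub0, hmub1, hmub2, hmub3, hdelb0, hdelb1, hdelb2, hdelb3⟩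
  have hc : 1 / (2 * Complex.I) ≠ 0 := by simp
  exact ⟨h.hKT_zero_zero, h.hKT_one_zero hc, h.hKT_two_zero hc, h.hKT_zero_one hc,
    h.hKT_one_one hc, h.hKT_two_one hc, h.hKT_zero_two hc, h.hKT_one_two hc, h.hKT_two_two⟩
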